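/- Let β > 0 and A : ℤ × ℤ → M₂(ℂ) with |A|_{β+} := sup_{s,s'} (1 + ||s|−|s'||)⟨s⟩^β⟨s'⟩^β ‖A_s^{s'}‖_∞ < ∞, and let ζ = (ζ_s)_{s∈ℤ} with ζ_s ∈ ℂ² and |ζ|_β := sup_s |ζ_s| ⟨s⟩^β < ∞. Then Aζ, defined by (Aζ)_s = ∑_k A_s^k ζ_k, satisfies |Aζ|_β ≤ C |A|_{β+} |ζ|_β for a constant C depending only on β. -/

import Mathlib

/-- Entrywise sup norm on `2×2` complex matrices. -/
noncomputable def mnorm (M : Matrix (Fin 2) (Fin 2) ℂ) : ℝ :=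
  ⨆ i : Fin 2, ⨆ j : Fin 2, ‖M i j‖

/-- Euclidean norm of a vector in `ℂ²`. -/
noncomputable def vnorm (v : Fin 2 → ℂ) : ℝ :=
  Real.sqrt (‖v 0‖ ^ 2 + ‖v 1‖ ^ 2)

/-!
Each term obeys `|A_s^k ζ_k| ⟨s⟩^β ≲ |A|_{β+} |ζ|_β / ((1 + ||s| - |k||) ⟨k⟩^{2β})`. Young's
inequality with the conjugate exponents `β + 1` and `(β + 1)/β` bounds the weight by
`(1 + ||s| - |k||)^{-(β+1)} + ⟨k⟩^{-2(β+1)}`; both exponents exceed `1`, and the first series is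
a shifted copy of `∑ (1 + |n|)^{-(β+1)}` on each half-line `k ≥ 0`, `k ≤ 0`, so the sum over `k`
is bounded independently of `s`.
-/

open Real Matrix

lemma norm_le_mnorm (M : Matrix (Fin 2) (Fin 2) ℂ) (i j : Fin 2) : ‖M i j‖ ≤ mnorm M :=
  (le_ciSup (Finite.bddAbove_range fun j => ‖M i j‖) j).trans
    (le_ciSup (Finite.bddAbove_range fun i => ⨆ j, ‖M i j‖) i)

lemma mnorm_nonneg (M : Matrix (Fin 2) (Fin 2) ℂ) : 0 ≤ mnorm M :=
  (norm_nonneg _).trans (norm_le_mnorm M 0 0)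

lemma vnorm_nonneg (v : Fin 2 → ℂ) : 0 ≤ vnorm v :=
  sqrt_nonneg _

lemma norm_le_vnorm (v : Fin 2 → ℂ) (i : Fin 2) : ‖v i‖ ≤ vnorm v := by
  rw [vnorm, le_sqrt (norm_nonneg _) (by positivity)]
  fin_cases i <;> simp

lemma vnorm_le_sqrt_two_mul_norm (v : Fin 2 → ℂ) : vnorm v ≤ √2 * ‖v‖ := by
  rw [vnorm, ← sqrt_sq (norm_nonneg v), ← sqrt_mul zero_le_two]
  gcongr
  have h0 := norm_le_pi_norm v 0
  have h1 := norm_le_pi_norm v 1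
  nlinarith [norm_nonneg (v 0), norm_nonneg (v 1)]

lemma norm_mulVec_le (M : Matrix (Fin 2) (Fin 2) ℂ) (v : Fin 2 → ℂ) :
    ‖M *ᵥ v‖ ≤ 2 * mnorm M * vnorm v := by
  have hM := mnorm_nonneg M
  have hv := vnorm_nonneg v
  refine (pi_norm_le_iff_of_nonneg (by positivity)).2 fun i => ?_
  calc ‖(M *ᵥ v) i‖ = ‖M i 0 * v 0 + M i 1 * v 1‖ := by
        simp [mulVec, dotProduct, Fin.sum_univ_two]
    _ ≤ ‖M i 0‖ * ‖v 0‖ + ‖M i 1‖ * ‖v 1‖ := (norm_add_le _ _).trans_eq (by simp)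
    _ ≤ mnorm M * vnorm v + mnorm M * vnorm v := by
        gcongr <;> first | exact norm_le_mnorm M _ _ | exact norm_le_vnorm v _
    _ = 2 * mnorm M * vnorm v := by ring

lemma summable_max_abs_one_rpow_neg {r : ℝ} (hr : 1 < r) :
    Summable fun n : ℤ => max |(n : ℝ)| 1 ^ (-r) := by
  refine (summable_abs_int_rpow hr).congr_cofinite ?_
  filter_upwards [Filter.eventually_cofinite_ne 0] with n hn
  rw [max_eq_left (by exact_mod_cast Int.one_le_abs hn)]

lemma summable_one_add_abs_rpow_neg {r : ℝ} (hr : 1 < r) :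
    Summable fun n : ℤ => (1 + |(n : ℝ)|) ^ (-r) :=
  (summable_max_abs_one_rpow_neg hr).of_nonneg_of_le (fun n => by positivity) fun n =>
    rpow_le_rpow_of_nonpos (by positivity)
      (max_le (by linarith [abs_nonneg (n : ℝ)]) (by linarith [abs_nonneg (n : ℝ)])) (by linarith)

section FoldedSeries

variable {g : ℤ → ℝ}

lemma summable_comp_sub (hg : Summable g) (n : ℤ) : Summable fun k => g (k - n) :=
  (Equiv.subRight n).summable_iff.2 hg

lemma summable_comp_neg_sub (hg : Summable g) (n : ℤ) : Summable fun k => g (-k - n) :=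
  ((Equiv.neg ℤ).trans (Equiv.subRight n)).summable_iff.2 hg

lemma comp_abs_sub_le (hg0 : ∀ m, 0 ≤ g m) (n k : ℤ) :
    g (|k| - n) ≤ g (k - n) + g (-k - n) := by
  rcases abs_choice k with h | h <;> rw [h] <;> linarith [hg0 (k - n), hg0 (-k - n)]

lemma summable_comp_abs_sub (hg0 : ∀ m, 0 ≤ g m) (hg : Summable g) (n : ℤ) :
    Summable fun k => g (|k| - n) :=
  ((summable_comp_sub hg n).add (summable_comp_neg_sub hg n)).of_nonneg_of_le (fun _ => hg0 _)
    (comp_abs_sub_le hg0 n)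

lemma tsum_comp_abs_sub_le (hg0 : ∀ m, 0 ≤ g m) (hg : Summable g) (n : ℤ) :
    ∑' k, g (|k| - n) ≤ 2 * ∑' m, g m :=
  calc ∑' k, g (|k| - n) ≤ ∑' k, (g (k - n) + g (-k - n)) :=
        (summable_comp_abs_sub hg0 hg n).tsum_le_tsum (comp_abs_sub_le hg0 n)
          ((summable_comp_sub hg n).add (summable_comp_neg_sub hg n))
    _ = 2 * ∑' m, g m := by
        rw [(summable_comp_sub hg n).tsum_add (summable_comp_neg_sub hg n),
          show ∑' k, g (k - n) = ∑' m, g m from (Equiv.subRight n).tsum_eq g,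
          show ∑' k, g (-k - n) = ∑' m, g m from ((Equiv.neg ℤ).trans (Equiv.subRight n)).tsum_eq g]
        ring

end FoldedSeries

lemma mul_le_rpow_add_rpow {a b p q : ℝ} (ha : 0 ≤ a) (hb : 0 ≤ b) (hpq : p.HolderConjugate q) :
    a * b ≤ a ^ p + b ^ q := by
  have hp : 1 ≤ p := hpq.lt.le
  have hq : 1 ≤ q := hpq.symm.lt.le
  calc a * b ≤ a ^ p / p + b ^ q / q := young_inequality_of_nonneg ha hb hpq
    _ ≤ a ^ p + b ^ q := by
        gcongr <;> exact div_le_self (by positivity) ‹_›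

lemma inv_mul_rpow_two_mul_le {β D t : ℝ} (hβ : 0 < β) (hD : 0 < D) (ht : 0 < t) :
    (D * t ^ (2 * β))⁻¹ ≤ D ^ (-(β + 1)) + t ^ (-(2 * (β + 1))) := by
  have hpq : (β + 1).HolderConjugate ((β + 1) / β) := by
    simpa [conjExponent] using HolderConjugate.conjExponent (by linarith : 1 < β + 1)
  calc (D * t ^ (2 * β))⁻¹ = D⁻¹ * (t ^ (2 * β))⁻¹ := mul_inv _ _
    _ ≤ D⁻¹ ^ (β + 1) + (t ^ (2 * β))⁻¹ ^ ((β + 1) / β) :=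
        mul_le_rpow_add_rpow (by positivity) (by positivity) hpq
    _ = D ^ (-(β + 1)) + t ^ (-(2 * (β + 1))) := by
        rw [inv_rpow hD.le, inv_rpow (by positivity), ← rpow_mul ht.le, rpow_neg hD.le,
          rpow_neg ht.le, show 2 * β * ((β + 1) / β) = 2 * (β + 1) by field_simp]

lemma norm_mulVec_le_of_weighted_le {β nA nζ : ℝ} (hβ : 0 < β) {s k : ℤ}
    {M : Matrix (Fin 2) (Fin 2) ℂ} {v : Fin 2 → ℂ}
    (hM : (1 + |(|(s : ℝ)| - |(k : ℝ)|)|) * (max |(s : ℝ)| 1) ^ β * (max |(k : ℝ)| 1) ^ β *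
      mnorm M ≤ nA)
    (hv : vnorm v * (max |(k : ℝ)| 1) ^ β ≤ nζ) :
    ‖M *ᵥ v‖ ≤ 2 * nA * nζ / max |(s : ℝ)| 1 ^ β *
      ((1 + |((|k| - |s| : ℤ) : ℝ)|) ^ (-(β + 1)) + max |(k : ℝ)| 1 ^ (-(2 * (β + 1)))) := by
  set D := 1 + |(|(s : ℝ)| - |(k : ℝ)|)|
  set ts := max |(s : ℝ)| 1
  set tk := max |(k : ℝ)| 1
  have hD : 0 < D := by positivity
  have htk : 0 < tk := lt_max_of_lt_right one_pos
  have hmM := mnorm_nonneg M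
  have hvv := vnorm_nonneg v
  have hnA : 0 ≤ nA := le_trans (by positivity) hM
  have hnζ : 0 ≤ nζ := le_trans (by positivity) hv
  have hcast : ((|k| - |s| : ℤ) : ℝ) = |(k : ℝ)| - |(s : ℝ)| := by push_cast; rfl
  rw [hcast, abs_sub_comm]
  have hprod : mnorm M * vnorm v * (ts ^ β * (D * tk ^ (2 * β))) ≤ nA * nζ := by
    rw [show 2 * β = β + β by ring, rpow_add htk]
    calc mnorm M * vnorm v * (ts ^ β * (D * (tk ^ β * tk ^ β)))
        = (D * ts ^ β * tk ^ β * mnorm M) * (vnorm v * tk ^ β) := by ring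
      _ ≤ nA * nζ := mul_le_mul hM hv (by positivity) hnA
  calc ‖M *ᵥ v‖ ≤ 2 * (mnorm M * vnorm v) := (norm_mulVec_le M v).trans_eq (by ring)
    _ ≤ 2 * (nA * nζ / (ts ^ β * (D * tk ^ (2 * β)))) := by
        gcongr; rwa [le_div_iff₀ (by positivity)]
    _ = 2 * nA * nζ / ts ^ β * (D * tk ^ (2 * β))⁻¹ := by field_simp
    _ ≤ _ := by gcongr; exact inv_mul_rpow_two_mul_le hβ hD htk

/-- Lemma 3.1(2): if `|A|_{β+} ≤ nA` and `|ζ|_β ≤ nζ`, then `Aζ` converges and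
`|Aζ|_β ≤ C nA nζ`, with `C` depending only on `β`. -/
theorem stmt_7 (β : ℝ) (hβ : 0 < β) :
    ∃ C > 0, ∀ (A : ℤ → ℤ → Matrix (Fin 2) (Fin 2) ℂ) (ζ : ℤ → Fin 2 → ℂ) (nA nζ : ℝ),
      (∀ s s' : ℤ,
        (1 + |(|(s : ℝ)| - |(s' : ℝ)|)|) * (max |(s : ℝ)| 1) ^ β * (max |(s' : ℝ)| 1) ^ β *
            mnorm (A s s') ≤ nA) →
      (∀ s : ℤ, vnorm (ζ s) * (max |(s : ℝ)| 1) ^ β ≤ nζ) →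
      ∀ s : ℤ,
        Summable (fun k : ℤ => (A s k).mulVec (ζ k)) ∧
        vnorm (∑' k : ℤ, (A s k).mulVec (ζ k)) * (max |(s : ℝ)| 1) ^ β ≤ C * nA * nζ := by
  set g : ℤ → ℝ := fun n => (1 + |(n : ℝ)|) ^ (-(β + 1))
  set h : ℤ → ℝ := fun n => max |(n : ℝ)| 1 ^ (-(2 * (β + 1)))
  have hg0 (n : ℤ) : 0 ≤ g n := by positivity
  have hg : Summable g := summable_one_add_abs_rpow_neg (by linarith)
  have hh : Summable h := summable_max_abs_one_rpow_neg (by linarith)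
  have hK : 0 < 2 * ∑' n, g n + ∑' n, h n :=
    add_pos_of_nonneg_of_pos (mul_nonneg zero_le_two (tsum_nonneg hg0))
      (hh.tsum_pos (fun n => by positivity) 0 (by simp [h]))
  refine ⟨2 * √2 * (2 * ∑' n, g n + ∑' n, h n), by positivity, ?_⟩
  intro A ζ nA nζ hA hζ s
  set ts := max |(s : ℝ)| 1
  have hts : 0 < ts := lt_max_of_lt_right one_pos
  set c := 2 * nA * nζ / ts ^ β
  have hterm (k : ℤ) : ‖A s k *ᵥ ζ k‖ ≤ c * (g (|k| - |s|) + h k) :=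
    norm_mulVec_le_of_weighted_le hβ (hA s k) (hζ k)
  have hc : 0 ≤ c := nonneg_of_mul_nonneg_left ((norm_nonneg _).trans (hterm 0))
    (by positivity)
  have hw : Summable fun k => c * (g (|k| - |s|) + h k) :=
    ((summable_comp_abs_sub hg0 hg |s|).add hh).mul_left c
  refine ⟨hw.of_norm_bounded hterm, ?_⟩
  have hnorm : ‖∑' k, A s k *ᵥ ζ k‖ ≤ c * (2 * ∑' n, g n + ∑' n, h n) := by
    refine (tsum_of_norm_bounded hw.hasSum hterm).trans ?_
    rw [tsum_mul_left, (summable_comp_abs_sub hg0 hg |s|).tsum_add hh]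
    gcongr
    exact tsum_comp_abs_sub_le hg0 hg |s|
  calc vnorm (∑' k, A s k *ᵥ ζ k) * ts ^ β ≤ √2 * (c * (2 * ∑' n, g n + ∑' n, h n)) * ts ^ β := by
        gcongr
        exact (vnorm_le_sqrt_two_mul_norm _).trans (by gcongr)
    _ = 2 * √2 * (2 * ∑' n, g n + ∑' n, h n) * nA * nζ := by
        simp only [c]; field_simp
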